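/- arXiv:1908.04415 — 2 statements merged into one kernel-verified Lean document; each statement's English description precedes it below -/
import Mathlib

section
/- Skew-symmetry of the DAHA expansion coefficients: for every n ∈ ℕ and every p ∈ ℤ one has a_{n,−p} = −a_{n,p} in F; in particular a_{n,0} = 0 for all n. -/
/- STATEMENT 0: Skew-symmetry of the DAHA expansion coefficients:
for every n ∈ ℕ and every p ∈ ℤ one has a_{n,−p} = −a_{n,p} in F = ℚ(q,t₁,t₂);
in particular a_{n,0} = 0 for all n. -/

noncomputable section

/-- The field `F = ℚ(q, t₁, t₂)` of rational functions in three indeterminates. -/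
abbrev F : Type := FractionRing (MvPolynomial (Fin 3) ℚ)

def q : F := algebraMap (MvPolynomial (Fin 3) ℚ) F (MvPolynomial.X 0)
def t1 : F := algebraMap (MvPolynomial (Fin 3) ℚ) F (MvPolynomial.X 1)
def t2 : F := algebraMap (MvPolynomial (Fin 3) ℚ) F (MvPolynomial.X 2)

/-- `A_p = (q^{2p−1}t₁^{−1} − q^{1−2p}t₁ + t₂ − t₂^{−1})/(q^{2p−1} − q^{1−2p})`. -/
def A (p : ℤ) : F :=
  (q ^ (2 * p - 1) * t1⁻¹ - q ^ (1 - 2 * p) * t1 + t2 - t2⁻¹) /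
    (q ^ (2 * p - 1) - q ^ (1 - 2 * p))

/-- The coefficients `a_{n,p}` defined by the DAHA recurrence:
`a_{0,p} = 0`; `a_{1,±1} = ±1`, `a_{1,p} = 0` otherwise; and for `n ≥ 1`,
`a_{n+1,p} = A_p a_{n,p−1} + (A_p − A_{p+1}) a_{n,p} + A_{−p} a_{n,p+1} − a_{n−1,p}`. -/
def a : ℕ → ℤ → F
  | 0, _ => 0
  | 1, p => if p = 1 then 1 else if p = -1 then -1 else 0
  | n + 2, p =>
      A p * a (n + 1) (p - 1) + (A p - A (p + 1)) * a (n + 1) p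
        + A (-p) * a (n + 1) (p + 1) - a n p

lemma q_ne_zero : q ≠ 0 := by
  unfold q
  intro h
  have := IsFractionRing.injective (MvPolynomial (Fin 3) ℚ) F
  have h0 : (MvPolynomial.X 0 : MvPolynomial (Fin 3) ℚ) = 0 := by
    apply this
    simpa using h
  exact MvPolynomial.X_ne_zero _ h0

lemma t1_ne_zero : t1 ≠ 0 := by
  unfold t1
  intro h
  have := IsFractionRing.injective (MvPolynomial (Fin 3) ℚ) F
  have h0 : (MvPolynomial.X 1 : MvPolynomial (Fin 3) ℚ) = 0 := by
    apply this
    simpa using h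
  exact MvPolynomial.X_ne_zero _ h0

lemma t2_ne_zero : t2 ≠ 0 := by
  unfold t2
  intro h
  have := IsFractionRing.injective (MvPolynomial (Fin 3) ℚ) F
  have h0 : (MvPolynomial.X 2 : MvPolynomial (Fin 3) ℚ) = 0 := by
    apply this
    simpa using h
  exact MvPolynomial.X_ne_zero _ h0

lemma q_pow_nat_ne_one (k : ℕ) (hk : k ≠ 0) : q ^ k ≠ 1 := by
  unfold q
  rw [← map_pow, show (1 : F) = algebraMap (MvPolynomial (Fin 3) ℚ) F 1 from (map_one _).symm]
  intro h
  have := IsFractionRing.injective (MvPolynomial (Fin 3) ℚ) F h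
  have hc := congrArg MvPolynomial.constantCoeff this
  simp [MvPolynomial.constantCoeff_X, hk] at hc

lemma q_zpow_ne_one (m : ℤ) (hm : m ≠ 0) : q ^ m ≠ 1 := by
  rcases lt_trichotomy m 0 with h | h | h
  · intro he
    have h1 : q ^ (-m) = 1 := by
      have : (q ^ m)⁻¹ = 1 := by rw [he]; simp
      rwa [← zpow_neg] at this
    have : (-m).toNat ≠ 0 := by omega
    have := q_pow_nat_ne_one (-m).toNat this
    rw [← zpow_natCast, Int.toNat_of_nonneg (by omega)] at this
    exact this h1
  · exact absurd h hm
  · intro he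
    have : m.toNat ≠ 0 := by omega
    have hne := q_pow_nat_ne_one m.toNat this
    rw [← zpow_natCast, Int.toNat_of_nonneg (by omega)] at hne
    exact hne he

lemma denom_ne_zero (p : ℤ) : q ^ (2 * p - 1) - q ^ (1 - 2 * p) ≠ 0 := by
  intro h
  have hq := q_ne_zero
  have he : q ^ (2 * p - 1) = q ^ (1 - 2 * p) := by linear_combination h
  have : q ^ ((2 * p - 1) - (1 - 2 * p)) = 1 := by
    rw [zpow_sub₀ hq, he, div_self (zpow_ne_zero _ hq)]
  exact q_zpow_ne_one _ (by omega) this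

lemma A_sum (p : ℤ) : A p + A (1 - p) = t1 + t1⁻¹ := by
  unfold A
  rw [show 2 * (1 - p) - 1 = 1 - 2 * p from by ring,
      show 1 - 2 * (1 - p) = 2 * p - 1 from by ring]
  have hd := denom_ne_zero p
  have hd' : q ^ (1 - 2 * p) - q ^ (2 * p - 1) ≠ 0 := by
    intro h; apply hd; linear_combination -h
  field_simp
  ring

theorem skew_symmetry_of_DAHA_coefficients :
    (∀ (n : ℕ) (p : ℤ), a n (-p) = - a n p) ∧ (∀ n : ℕ, a n 0 = 0) := by
  have key : ∀ (n : ℕ) (p : ℤ), a n (-p) = - a n p := by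
    intro n
    induction n using Nat.strong_induction_on with
    | _ n ih =>
      match n with
      | 0 => intro p; simp [a]
      | 1 =>
        intro p
        simp only [a]
        split_ifs <;> (first | (exfalso; omega) | ring)
      | (m + 2) =>
        intro p
        have ih1 := ih (m + 1) (by omega)
        have ih0 := ih m (by omega)
        have hA : A (-p) - A (-(p - 1)) = A p - A (p + 1) := by
          have h1 := A_sum p
          have h2 := A_sum (p + 1)
          rw [show 1 - (p + 1) = -p from by ring] at h2
          rw [show -(p - 1) = 1 - p from by ring]
          linear_combination h2 - h1
        show a (m + 2) (-p) = - a (m + 2) p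
        simp only [a, neg_neg]
        rw [show -p - 1 = -(p + 1) from by ring, show -p + 1 = -(p - 1) from by ring,
          ih1 (p + 1), ih1 p, ih1 (p - 1), ih0 p]
        linear_combination (-(a (m + 1) p)) * hA
  refine ⟨key, fun n => ?_⟩
  have h0 := key n 0
  rw [neg_zero] at h0
  have h2 : (2 : F) * a n 0 = 0 := by linear_combination h0
  exact (mul_eq_zero.mp h2).resolve_left two_ne_zero

end
end

section
/- Top coefficients of the DAHA expansion: for every n ≥ 2, a_{n,n} = A_2 A_3 ⋯ A_n = ∏_{k=2}^{n} A_k, and a_{n,n−1} = (∏_{k=2}^{n−1} A_k)(A_1 − A_n). -/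
/- STATEMENT 2: Top coefficients of the DAHA expansion: for every n ≥ 2,
a_{n,n} = ∏_{k=2}^{n} A_k and a_{n,n−1} = (∏_{k=2}^{n−1} A_k)(A_1 − A_n). -/

noncomputable section

/- Since `a n p = 0` for `p > n`, on the two top diagonals the recurrence loses its terms from
above: `a (n+1) (n+1) = A (n+1) * a n n` and
`a (n+1) n = A n * a n (n-1) + (A n - A (n+1)) * a n n`. Both formulas follow by induction,
the second telescoping in `A 1 - A n`. -/

lemma Finset.prod_Icc_add_one_right {M : Type*} [CommMonoid M] (f : ℤ → M) {a b : ℤ}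
    (h : a ≤ b + 1) :
    ∏ k ∈ Finset.Icc a (b + 1), f k = (∏ k ∈ Finset.Icc a b, f k) * f (b + 1) := by
  rw [← Finset.insert_Icc_right_eq_Icc_add_one h, Finset.prod_insert (by simp), mul_comm]

lemma a_add_two (n : ℕ) (p : ℤ) :
    a (n + 2) p = A p * a (n + 1) (p - 1) + (A p - A (p + 1)) * a (n + 1) p
      + A (-p) * a (n + 1) (p + 1) - a n p :=
  rfl

lemma a_eq_zero_of_lt : ∀ {n : ℕ} {p : ℤ}, (n : ℤ) < p → a n p = 0
  | 0, _, _ => rfl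
  | 1, p, h => by
    simp only [a]
    rw [if_neg (by omega), if_neg (by omega)]
  | n + 2, p, h => by
    push_cast at h
    rw [a_add_two, a_eq_zero_of_lt (n := n + 1) (by push_cast; omega),
      a_eq_zero_of_lt (n := n + 1) (by push_cast; omega),
      a_eq_zero_of_lt (n := n + 1) (by push_cast; omega), a_eq_zero_of_lt (n := n) (by omega)]
    ring

lemma a_diag (n : ℕ) : a (n + 1) (n + 1) = ∏ k ∈ Finset.Icc (2 : ℤ) (n + 1), A k := by
  induction n with
  | zero => simp [a]
  | succ n ih =>
    rw [Nat.cast_add_one, a_add_two, add_sub_cancel_right, ih,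
      a_eq_zero_of_lt (n := n + 1) (by push_cast; omega),
      a_eq_zero_of_lt (n := n + 1) (by push_cast; omega),
      a_eq_zero_of_lt (n := n) (by omega),
      Finset.prod_Icc_add_one_right A (b := (n : ℤ) + 1) (by omega)]
    ring

lemma a_subdiag (n : ℕ) :
    a (n + 2) (n + 1) = (∏ k ∈ Finset.Icc (2 : ℤ) (n + 1), A k) * (A 1 - A (n + 2)) := by
  induction n with
  | zero => simp [a]
  | succ n ih =>
    have h_diag := a_diag (n + 1)
    rw [show (n : ℤ) + 2 = n + 1 + 1 by ring] at ih
    rw [Nat.cast_add_one] at h_diag ⊢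
    rw [show (n : ℤ) + 1 + 2 = n + 1 + 1 + 1 by ring, a_add_two, add_sub_cancel_right, ih,
      h_diag, a_eq_zero_of_lt (n := n + 2) (by push_cast; omega),
      a_eq_zero_of_lt (n := n + 1) (by push_cast; omega),
      Finset.prod_Icc_add_one_right A (b := (n : ℤ) + 1) (by omega)]
    ring

theorem top_coefficients (n : ℕ) (hn : 2 ≤ n) :
    a n (n : ℤ) = ∏ k ∈ Finset.Icc (2 : ℤ) (n : ℤ), A k ∧
    a n ((n : ℤ) - 1) = (∏ k ∈ Finset.Icc (2 : ℤ) ((n : ℤ) - 1), A k) * (A 1 - A (n : ℤ)) := by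
  obtain ⟨m, rfl⟩ := Nat.exists_eq_add_of_le' hn
  have h_diag := a_diag (m + 1)
  have h_subdiag := a_subdiag m
  push_cast at h_diag ⊢
  rw [show (m : ℤ) + 2 - 1 = m + 1 by ring, show (m : ℤ) + 2 = m + 1 + 1 by ring]
  exact ⟨h_diag, h_subdiag⟩

end
end
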